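/- Let R be a discrete valuation ring with fraction field K, let X be an integral scheme, and let f : X → Spec R be a proper morphism whose generic fiber X_η satisfies that the canonical map K → Γ(X_η, O_{X_η}) is an isomorphism. Then the canonical map R → Γ(X, O_X) is an isomorphism. -/

import Mathlib

/-!
Since `R` is a discrete valuation ring, `K = R[1/ϖ]` for a uniformizer `ϖ`, so the generic fiber
`X_η` is an open subscheme of `X`; it is nonempty because `Γ(X_η) ≅ K ≠ 0`. As `X` is integral,
restriction `Γ(X) → Γ(X_η) ≅ K` is injective, so `R ⊆ Γ(X) ⊆ K`. The image of the proper map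
`f` is closed, so it contains the closed point of `Spec R`, and a nonunit of `R` stays a nonunit
in `Γ(X)`: the ring `Γ(X)` dominates the valuation ring `R` inside `K`, hence equals it.
-/

open AlgebraicGeometry CategoryTheory Limits

universe u

theorem IsDiscreteValuationRing.isLocalization_away_of_irreducible {R K : Type*} [CommRing R]
    [IsDomain R] [IsDiscreteValuationRing R] [Field K] [Algebra R K] [IsFractionRing R K]
    {ϖ : R} (hϖ : Irreducible ϖ) : IsLocalization.Away ϖ K := by
  refine (IsLocalization.iff_of_le_of_exists_dvd _ (nonZeroDivisors R)
    (powers_le_nonZeroDivisors_of_noZeroDivisors hϖ.ne_zero) fun b hb ↦ ?_).mpr inferInstance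
  obtain ⟨n, u, rfl⟩ := eq_unit_mul_pow_irreducible (nonZeroDivisors.ne_zero hb) hϖ
  exact ⟨ϖ ^ n, ⟨n, rfl⟩, Units.mul_left_dvd.mpr dvd_rfl⟩

theorem ValuationRing.bijective_of_isLocalHom {R K A : Type*} [CommRing R] [IsDomain R]
    [ValuationRing R] [Field K] [Algebra R K] [IsFractionRing R K] [CommRing A]
    (g : R →+* A) [IsLocalHom g] (j : A →+* K) (hj : Function.Injective j)
    (hjg : j.comp g = algebraMap R K) : Function.Bijective g := by
  have hjg' (r : R) : j (g r) = algebraMap R K r := RingHom.congr_fun hjg r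
  refine ⟨fun a b hab ↦ IsFractionRing.injective R K (by rw [← hjg', ← hjg', hab]), fun a ↦ ?_⟩
  rcases ValuationRing.isInteger_or_isInteger R (j a) with ⟨r, hr⟩ | ⟨r, hr⟩
  · exact ⟨r, hj (by rw [hjg', hr])⟩
  by_cases ha : a = 0
  · exact ⟨0, by rw [ha, map_zero]⟩
  have hja : j a ≠ 0 := (map_ne_zero_iff j hj).mpr ha
  have hra : g r * a = 1 := hj (by rw [map_mul, hjg', hr, map_one, inv_mul_cancel₀ hja])
  obtain ⟨u, rfl⟩ := isUnit_of_map_unit g r (.of_mul_eq_one _ hra)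
  exact ⟨↑u⁻¹, hj (by rw [hjg', map_units_inv, hr, inv_inv])⟩

namespace AlgebraicGeometry.Scheme.Hom

theorem appTop_injective_of_isIntegral {U X : Scheme.{u}} [IsIntegral X] [Nonempty U]
    (ι : U ⟶ X) [IsOpenImmersion ι] : Function.Injective ι.appTop := by
  obtain ⟨z⟩ := ‹Nonempty U›
  intro a b hab
  apply germ_injective_of_isIntegral X (ι.base z) (Set.mem_univ _)
  apply ((ConcreteCategory.isIso_iff_bijective (ι.stalkMap z)).mp inferInstance).injective
  simp only [germ_stalkMap_apply]
  exact congrArg _ hab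

theorem isLocalHom_ΓSpecIso_inv_comp_appTop {R : CommRingCat.{u}} [IsLocalRing R]
    {X : Scheme.{u}} [Nonempty X] (f : X ⟶ Spec R) [UniversallyClosed f] :
    IsLocalHom ((ΓSpecIso R).inv ≫ f.appTop).hom := by
  refine ⟨fun r hr ↦ ?_⟩
  obtain ⟨x⟩ := ‹Nonempty X›
  obtain ⟨y, hy⟩ : IsLocalRing.closedPoint R ∈ Set.range f.base :=
    (IsLocalRing.specializes_closedPoint (f.base x)).mem_closed
      f.isClosedMap.isClosed_range ⟨x, rfl⟩
  have hy' : y ∈ X.basicOpen (((ΓSpecIso R).inv ≫ f.appTop) r) := by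
    rw [X.basicOpen_of_isUnit hr]
    trivial
  rw [CommRingCat.comp_apply, ← preimage_basicOpen_top, mem_preimage, hy,
    basicOpen_eq_of_affine] at hy'
  exact IsLocalRing.notMem_maximalIdeal.mp hy'

end AlgebraicGeometry.Scheme.Hom

/-- Let `R` be a discrete valuation ring with fraction field `K`, `X` an integral scheme and
`f : X ⟶ Spec R` a proper morphism such that the canonical map `K → Γ(X_η, O)` from `K` to
the global sections of the generic fiber `X_η = X ×_{Spec R} Spec K` is an isomorphism.
Then the canonical map `R → Γ(X, O_X)` is an isomorphism. -/
theorem globalSections_eq_R_of_proper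
    {R K : Type u} [CommRing R] [IsDomain R] [IsDiscreteValuationRing R]
    [Field K] [Algebra R K] [IsFractionRing R K]
    (X : Scheme.{u}) [IsIntegral X] (f : X ⟶ Spec (CommRingCat.of R)) [IsProper f]
    (hη : IsIso ((Scheme.ΓSpecIso (CommRingCat.of K)).inv ≫
      (pullback.snd f (Spec.map (CommRingCat.ofHom (algebraMap R K)))).appTop)) :
    IsIso ((Scheme.ΓSpecIso (CommRingCat.of R)).inv ≫ f.appTop) := by
  set φ := CommRingCat.ofHom (algebraMap R K)
  obtain ⟨ϖ, hϖ⟩ := IsDiscreteValuationRing.exists_irreducible R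
  have := IsDiscreteValuationRing.isLocalization_away_of_irreducible (K := K) hϖ
  have : IsOpenImmersion (Spec.map φ) := IsOpenImmersion.of_isLocalization ϖ
  let e : K ≃+* Γ(pullback f (Spec.map φ), ⊤) := (asIso ((Scheme.ΓSpecIso (.of K)).inv ≫
    (pullback.snd f (Spec.map φ)).appTop)).commRingCatIsoToRingEquiv
  have : Nonempty ↑(pullback f (Spec.map φ)) := by
    by_contra h
    have := not_nonempty_iff.mp h
    exact not_subsingleton K e.injective.subsingleton
  let j := e.symm.toRingHom.comp (pullback.fst f (Spec.map φ)).appTop.hom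
  have hj : Function.Injective j :=
    e.symm.injective.comp (pullback.fst f _).appTop_injective_of_isIntegral
  have hsq : (Scheme.ΓSpecIso _).inv ≫ f.appTop ≫ (pullback.fst f (Spec.map φ)).appTop =
      φ ≫ (Scheme.ΓSpecIso _).inv ≫ (pullback.snd f (Spec.map φ)).appTop := by
    rw [← Scheme.Hom.comp_appTop, pullback.condition, Scheme.Hom.comp_appTop,
      Scheme.ΓSpecIso_inv_naturality_assoc]
  have hjg : j.comp ((Scheme.ΓSpecIso _).inv ≫ f.appTop).hom = algebraMap R K :=
    RingHom.ext fun r ↦ e.symm_apply_eq.mpr (ConcreteCategory.congr_hom hsq r)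
  have := f.isLocalHom_ΓSpecIso_inv_comp_appTop
  exact (ConcreteCategory.isIso_iff_bijective _).mpr
    (ValuationRing.bijective_of_isLocalHom _ j hj hjg)
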